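/- Let f : ℝ × ℝⁿ → ℝⁿ be continuous, M₀ symmetric positive definite, and δ₀ < Δ₀. Suppose max over x ∈ B_{M₀}(x₀, Δ₀) and s ∈ [0, h] of ‖h·f(t₀+s, x)‖_{M₀} ≤ Δ₀ − δ₀. Then for every initial condition x̄ ∈ B_{M₀}(x₀, δ₀), every solution χ of ẋ = f(t,x) with χ(t₀) = x̄ satisfies χ(t) ∈ B_{M₀}(x₀, Δ₀) for all t ∈ [t₀, t₀+h]. -/

import Mathlib

open Matrix Set

noncomputable def specNorm {n : ℕ} (B : Matrix (Fin n) (Fin n) ℝ) : ℝ :=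
  ‖Matrix.toEuclideanCLM (𝕜 := ℝ) B‖

noncomputable def specNormC {n : ℕ} (B : Matrix (Fin n) (Fin n) ℂ) : ℝ :=
  ‖Matrix.toEuclideanCLM (𝕜 := ℂ) B‖

noncomputable def wnorm {n : ℕ} (M : Matrix (Fin n) (Fin n) ℝ) (x : Fin n → ℝ) : ℝ :=
  Real.sqrt (dotProduct x (M.mulVec x))

noncomputable def euclNorm {n : ℕ} (x : Fin n → ℝ) : ℝ :=
  Real.sqrt (dotProduct x x)

open Topology Filter
open scoped MatrixOrder

/-!
Writing `M₀ = Bᵀ B`, the weighted norm is `‖x‖_{M₀} = ‖B x‖₂`, so everything happens in a normed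
space. There a continuous-induction argument shows that a curve whose speed is at most
`K = (Δ₀ - δ₀) / h` as long as it stays in the ball of radius `K h` around its starting point
satisfies `‖χ t - χ t₀‖ ≤ K (t - t₀)`, hence never leaves that ball before time `t₀ + h`.
Since `‖x̄ - x₀‖ ≤ δ₀`, that ball lies inside the ball of radius `Δ₀` around `x₀`, where the
hypothesis provides the speed bound.
-/

theorem norm_image_sub_le_of_norm_deriv_right_le_in_ball {E : Type*}
    [NormedAddCommGroup E] [NormedSpace ℝ E] {γ γ' : ℝ → E} {a b K : ℝ} (hK : 0 < K)
    (hγ : ContinuousOn γ (Icc a b))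
    (hγ' : ∀ t ∈ Ico a b, HasDerivWithinAt γ (γ' t) (Ici t) t)
    (hbound : ∀ t ∈ Ico a b, ‖γ t - γ a‖ ≤ K * (b - a) → ‖γ' t‖ ≤ K) :
    ∀ t ∈ Icc a b, ‖γ t - γ a‖ ≤ K * (t - a) := by
  set s := {t | ‖γ t - γ a‖ ≤ K * (t - a)}
  have hclosed : IsClosed (s ∩ Icc a b) := by
    rw [inter_comm]
    exact ((hγ.sub continuousOn_const).norm.prodMk
      (continuousOn_const.mul (continuousOn_id.sub continuousOn_const))).preimage_isClosed_of_isClosed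
        isClosed_Icc OrderClosedTopology.isClosed_le'
  refine fun t ht => hclosed.Icc_subset_of_forall_mem_nhdsWithin (by simp [s]) ?_ ht
  rintro x ⟨hxs, hx⟩
  -- At `x < b` the curve is strictly inside the ball, so the derivative bound holds on a whole
  -- right neighbourhood of `x` and the mean value inequality pushes the estimate past `x`.
  have hlt : ‖γ x - γ a‖ < K * (b - a) :=
    hxs.trans_lt (mul_lt_mul_of_pos_left (by linarith [hx.2]) hK)
  have hnear : ∀ᶠ u in 𝓝[Icc a b] x, ‖γ u - γ a‖ < K * (b - a) :=
    ((hγ x (Ico_subset_Icc_self hx)).sub continuousWithinAt_const).norm.eventually_lt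
      continuousWithinAt_const hlt
  obtain ⟨u, hxu, hu⟩ := mem_nhdsGE_iff_exists_Ico_subset.1 <|
    inter_mem (Ico_mem_nhdsGE hx.2) (nhdsWithin_le_of_mem (Icc_mem_nhdsGE_of_mem hx) hnear)
  filter_upwards [Ioo_mem_nhdsGT hxu] with y hy
  have hxy : ∀ t ∈ Icc x y, t ∈ Ico a b ∧ ‖γ t - γ a‖ < K * (b - a) := fun t ht =>
    have hut := hu (Icc_subset_Ico_right hy.2 ht)
    ⟨⟨hx.1.trans hut.1.1, hut.1.2⟩, hut.2⟩
  have hmvt : ‖γ y - γ x‖ ≤ K * (y - x) :=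
    norm_image_sub_le_of_norm_deriv_right_le_segment
      (hγ.mono fun t ht => Ico_subset_Icc_self (hxy t ht).1)
      (fun t ht => hγ' t (hxy t (Ico_subset_Icc_self ht)).1)
      (fun t ht => hbound t (hxy t (Ico_subset_Icc_self ht)).1
        (hxy t (Ico_subset_Icc_self ht)).2.le)
      y (right_mem_Icc.2 hy.1.le)
  show ‖γ y - γ a‖ ≤ K * (y - a)
  calc ‖γ y - γ a‖ ≤ ‖γ y - γ x‖ + ‖γ x - γ a‖ := norm_sub_le_norm_sub_add_norm_sub _ _ _
    _ ≤ K * (y - x) + K * (x - a) := add_le_add hmvt hxs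
    _ = K * (y - a) := by ring

theorem norm_image_sub_le_of_step_mul_norm_deriv_le {E : Type*}
    [NormedAddCommGroup E] [NormedSpace ℝ E] {γ γ' : ℝ → E} {c : E} {a h δ Δ : ℝ}
    (hh : 0 < h) (hδΔ : δ < Δ) (hγ : ContinuousOn γ (Icc a (a + h)))
    (hγ' : ∀ t ∈ Ico a (a + h), HasDerivWithinAt γ (γ' t) (Ici t) t)
    (ha : ‖γ a - c‖ ≤ δ)
    (hbound : ∀ t ∈ Ico a (a + h), ‖γ t - c‖ ≤ Δ → h * ‖γ' t‖ ≤ Δ - δ) :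
    ∀ t ∈ Icc a (a + h), ‖γ t - c‖ ≤ Δ := by
  have hK : 0 < (Δ - δ) / h := div_pos (sub_pos.2 hδΔ) hh
  have hball : ∀ t, ‖γ t - γ a‖ ≤ Δ - δ → ‖γ t - c‖ ≤ Δ := fun t ht => by
    linarith [norm_sub_le_norm_sub_add_norm_sub (γ t) (γ a) c]
  have hstep : ∀ t ∈ Icc a (a + h), ‖γ t - γ a‖ ≤ Δ - δ := by
    intro t ht
    have hlin := norm_image_sub_le_of_norm_deriv_right_le_in_ball hK hγ hγ'
      (fun s hs hin => by
        rw [le_div_iff₀ hh, mul_comm]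
        exact hbound s hs (hball s (by rwa [add_sub_cancel_left, div_mul_cancel₀ _ hh.ne'] at hin)))
      t ht
    calc ‖γ t - γ a‖ ≤ (Δ - δ) / h * (t - a) := hlin
      _ ≤ (Δ - δ) / h * h := mul_le_mul_of_nonneg_left (by linarith [ht.2]) hK.le
      _ = Δ - δ := div_mul_cancel₀ _ hh.ne'
  exact fun t ht => hball t (hstep t ht)

lemma exists_continuousLinearMap_wnorm_eq {n : ℕ} {M : Matrix (Fin n) (Fin n) ℝ}
    (hM : M.PosSemidef) :
    ∃ L : (Fin n → ℝ) →L[ℝ] EuclideanSpace ℝ (Fin n), ∀ x, wnorm M x = ‖L x‖ := by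
  obtain ⟨B, rfl⟩ := CStarAlgebra.nonneg_iff_eq_star_mul_self.mp hM.nonneg
  refine ⟨(EuclideanSpace.equiv (Fin n) ℝ).symm.toContinuousLinearMap ∘L
    (mulVecLin B).toContinuousLinearMap, fun x => ?_⟩
  rw [EuclideanSpace.norm_eq, wnorm, ← mulVec_mulVec, dotProduct_mulVec, star_eq_conjTranspose,
    vecMul_conjTranspose, star_trivial]
  simp [dotProduct, sq]

theorem stmt6_general {n : ℕ} (f : ℝ → (Fin n → ℝ) → (Fin n → ℝ))
    (M₀ : Matrix (Fin n) (Fin n) ℝ) (hM₀ : M₀.PosDef)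
    (x₀ xb : Fin n → ℝ) (t₀ h δ₀ Δ₀ : ℝ)
    (hh : 0 < h) (hδΔ : δ₀ < Δ₀)
    (hbound : ∀ x, wnorm M₀ (x - x₀) ≤ Δ₀ →
      ∀ s ∈ Icc (0 : ℝ) h, wnorm M₀ (h • f (t₀ + s) x) ≤ Δ₀ - δ₀)
    (hxb : wnorm M₀ (xb - x₀) ≤ δ₀)
    (χ : ℝ → (Fin n → ℝ)) (hχ₀ : χ t₀ = xb)
    (hχ : ∀ t ∈ Icc t₀ (t₀ + h), HasDerivAt χ (f t (χ t)) t) :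
    ∀ t ∈ Icc t₀ (t₀ + h), wnorm M₀ (χ t - x₀) ≤ Δ₀ := by
  obtain ⟨L, hL⟩ := exists_continuousLinearMap_wnorm_eq hM₀.posSemidef
  have hsub : ∀ x, wnorm M₀ (x - x₀) = ‖L x - L x₀‖ := fun x => by rw [hL, map_sub]
  have hLχ : ∀ t ∈ Icc t₀ (t₀ + h), HasDerivAt (fun s => L (χ s)) (L (f t (χ t))) t :=
    fun t ht => L.hasFDerivAt.comp_hasDerivAt t (hχ t ht)
  intro t ht
  rw [hsub]
  refine norm_image_sub_le_of_step_mul_norm_deriv_le hh hδΔ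
    (fun s hs => (hLχ s hs).continuousAt.continuousWithinAt)
    (fun s hs => (hLχ s (Ico_subset_Icc_self hs)).hasDerivWithinAt)
    (by rw [← hsub, hχ₀]; exact hxb) (fun s hs hin => ?_) t ht
  have hs₀ : s - t₀ ∈ Icc 0 h := ⟨by linarith [hs.1], by linarith [hs.2]⟩
  have hspeed := hbound (χ s) ((hsub _).trans_le hin) (s - t₀) hs₀
  rwa [add_sub_cancel, hL, map_smul, norm_smul, Real.norm_of_nonneg hh.le] at hspeed

/-- Theorem 3: if max over B_{M₀}(x₀,Δ₀) × [0,h] of ‖h·f(t₀+s,x)‖_{M₀} ≤ Δ₀-δ₀, then every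
solution starting in B_{M₀}(x₀,δ₀) at t₀ stays in B_{M₀}(x₀,Δ₀) on [t₀,t₀+h]. -/
theorem stmt6 {n : ℕ} (f : ℝ → (Fin n → ℝ) → (Fin n → ℝ))
    (hf : Continuous fun p : ℝ × (Fin n → ℝ) => f p.1 p.2)
    (M₀ : Matrix (Fin n) (Fin n) ℝ) (hM₀ : M₀.PosDef)
    (x₀ xb : Fin n → ℝ) (t₀ h δ₀ Δ₀ : ℝ)
    (hh : 0 < h) (hδ₀ : 0 ≤ δ₀) (hδΔ : δ₀ < Δ₀)
    (hbound : ∀ x, wnorm M₀ (x - x₀) ≤ Δ₀ →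
      ∀ s ∈ Icc (0 : ℝ) h, wnorm M₀ (h • f (t₀ + s) x) ≤ Δ₀ - δ₀)
    (hxb : wnorm M₀ (xb - x₀) ≤ δ₀)
    (χ : ℝ → (Fin n → ℝ)) (hχ₀ : χ t₀ = xb)
    (hχ : ∀ t ∈ Icc t₀ (t₀ + h), HasDerivAt χ (f t (χ t)) t) :
    ∀ t ∈ Icc t₀ (t₀ + h), wnorm M₀ (χ t - x₀) ≤ Δ₀ :=
  stmt6_general f M₀ hM₀ x₀ xb t₀ h δ₀ Δ₀ hh hδΔ hbound hxb χ hχ₀ hχ
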